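/- Let a, b ∈ ℝ with b > 0, and let ρ₁(a,b) be the 6×6 matrix (1/(2(a²+b²))) · [[a²,0,0,0,ab,0],[0,b²,0,0,0,ab],[0,0,0,0,0,0],[0,0,0,0,0,0],[ab,0,0,0,b²,0],[0,ab,0,0,0,a²]], regarded as a 2⊗3 state. Then the geometric discord of ρ₁(a,b) equals 2a²b²/(a²+b²)² when a² ≥ 2b², and equals (a⁴ + 2a²b²)/(2(a²+b²)²) when a² ≤ 2b². -/

import Mathlib

open Matrix BigOperators Polynomial
open scoped Kronecker ComplexOrder

noncomputable section

/-- Squared Hilbert–Schmidt norm `‖C‖² = Tr(CᴴC)`. -/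
def hsNormSq {d : Type*} [Fintype d] (C : Matrix d d ℂ) : ℝ :=
  (Matrix.trace (Cᴴ * C)).re

/-- Trace norm `‖X‖₁ = Tr √(XᴴX)`. -/
def traceNorm {d : Type*} [Fintype d] [DecidableEq d] (X : Matrix d d ℂ) : ℝ :=
  (((Matrix.isHermitian_conjTranspose_mul_self X).eigenvectorUnitary.1 *
      diagonal (fun i => ((Real.sqrt ((Matrix.isHermitian_conjTranspose_mul_self X).eigenvalues i) : ℝ) : ℂ)) *
      (star (Matrix.isHermitian_conjTranspose_mul_self X).eigenvectorUnitary :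
        Matrix d d ℂ)).trace).re

/-- Partial transpose on the first factor: `ρ^Γ((i,k),(j,l)) = ρ((j,k),(i,l))`. -/
def ptranspose {m n : ℕ} (ρ : Matrix (Fin m × Fin n) (Fin m × Fin n) ℂ) :
    Matrix (Fin m × Fin n) (Fin m × Fin n) ℂ :=
  Matrix.of fun p q => ρ (q.1, p.2) (p.1, q.2)

/-- Negativity `N(ρ) = (‖ρ^Γ‖₁ - 1)/(m-1)`. -/
def negativity {m n : ℕ} (ρ : Matrix (Fin m × Fin n) (Fin m × Fin n) ℂ) : ℝ :=
  (traceNorm (ptranspose ρ) - 1) / ((m : ℝ) - 1)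

/-- `ψ` is an orthonormal basis of `ℂ^m` (an orthonormal family of `m` vectors). -/
def IsONB {m : ℕ} (ψ : Fin m → (Fin m → ℂ)) : Prop :=
  ∀ k l, (∑ i, star (ψ k i) * ψ l i) = if k = l then 1 else 0

/-- The rank-one projector `|v⟩⟨v|`. -/
def proj {m : ℕ} (v : Fin m → ℂ) : Matrix (Fin m) (Fin m) ℂ :=
  Matrix.vecMulVec v (fun j => star (v j))

/-- The von Neumann measurement map
`Π^A(ρ) = ∑ k, (|ψ_k⟩⟨ψ_k| ⊗ I_n) ρ (|ψ_k⟩⟨ψ_k| ⊗ I_n)`. -/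
def piA {m n : ℕ} (ψ : Fin m → (Fin m → ℂ))
    (ρ : Matrix (Fin m × Fin n) (Fin m × Fin n) ℂ) :
    Matrix (Fin m × Fin n) (Fin m × Fin n) ℂ :=
  ∑ k, (proj (ψ k) ⊗ₖ (1 : Matrix (Fin n) (Fin n) ℂ)) * ρ *
       (proj (ψ k) ⊗ₖ (1 : Matrix (Fin n) (Fin n) ℂ))

/-- Geometric discord
`D(ρ) = (m/(m-1)) · inf over von Neumann measurements of ‖ρ - Π^A(ρ)‖²`. -/
def gd {m n : ℕ} (ρ : Matrix (Fin m × Fin n) (Fin m × Fin n) ℂ) : ℝ :=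
  ((m : ℝ) / ((m : ℝ) - 1)) *
    ⨅ ψ : {ψ : Fin m → (Fin m → ℂ) // IsONB ψ}, hsNormSq (ρ - piA ψ.1 ρ)

/-- An `m ⊗ n` state: positive semidefinite with trace one. -/
def IsState {m n : ℕ} (ρ : Matrix (Fin m × Fin n) (Fin m × Fin n) ℂ) : Prop :=
  ρ.PosSemidef ∧ ρ.trace = 1

/-- Reindex a `6 × 6` matrix by `Fin 2 × Fin 3` with the ordering
`(1,1),(1,2),(1,3),(2,1),(2,2),(2,3)`. -/
def ofM6 (M : Matrix (Fin 6) (Fin 6) ℂ) :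
    Matrix (Fin 2 × Fin 3) (Fin 2 × Fin 3) ℂ :=
  Matrix.of fun p q =>
    M ⟨p.1.val * 3 + p.2.val, by have := p.1.isLt; have := p.2.isLt; omega⟩
      ⟨q.1.val * 3 + q.2.val, by have := q.1.isLt; have := q.2.isLt; omega⟩

/-- The family of states `ρ₁(a,b)`. -/
def rho1 (a b : ℝ) : Matrix (Fin 2 × Fin 3) (Fin 2 × Fin 3) ℂ :=
  ofM6 ((1 / (2 * ((a : ℂ)^2 + (b : ℂ)^2))) •
    !![(a:ℂ)^2, 0, 0, 0, (a:ℂ)*(b:ℂ), 0;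
       0, (b:ℂ)^2, 0, 0, 0, (a:ℂ)*(b:ℂ);
       0, 0, 0, 0, 0, 0;
       0, 0, 0, 0, 0, 0;
       (a:ℂ)*(b:ℂ), 0, 0, 0, (b:ℂ)^2, 0;
       0, (a:ℂ)*(b:ℂ), 0, 0, 0, (a:ℂ)^2])


/-!
For an orthonormal basis `ψ`, the measurement map `Π^A` is a pinching `ρ ↦ ∑ₖ Qₖ ρ Qₖ` by the
orthogonal projections `Qₖ = |ψₖ⟩⟨ψₖ| ⊗ I`; it is self-adjoint and idempotent for the trace inner
product, so `‖ρ - Π^A ρ‖² = ‖ρ‖² - Tr(ρᴴ Π^A ρ)`. For `ρ₁(a,b)` the right-hand side is computed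
block by block and equals `(a²b² + u a²(a² - 2b²)) / (a² + b²)²`, where `u = |ψ₁₁|²|ψ₁₂|²` ranges
over `[0, 1/4]`. Being affine in `u`, it is minimised by the standard basis (`u = 0`) when
`a² ≥ 2b²` and by the Hadamard basis (`u = 1/4`) when `a² ≤ 2b²`.
-/

open Complex (normSq)

namespace IsONB

variable {m : ℕ} {ψ : Fin m → Fin m → ℂ}

theorem sum_mul_star (h : IsONB ψ) (i j : Fin m) :
    ∑ k, ψ k i * star (ψ k j) = if i = j then 1 else 0 := by
  have hrows : of ψ * (of ψ)ᴴ = 1 := by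
    ext k l
    simpa [mul_apply, one_apply, mul_comm, eq_comm] using congrArg star (h k l)
  have hcols : ((of ψ)ᴴ * of ψ) j i = (1 : Matrix (Fin m) (Fin m) ℂ) j i := by
    rw [mul_eq_one_comm.mp hrows]
  simpa [mul_apply, one_apply, mul_comm, eq_comm] using hcols

theorem sum_normSq_row (h : IsONB ψ) (k : Fin m) : ∑ i, normSq (ψ k i) = 1 := by
  have := h k k
  simp only [if_true, Complex.star_def, ← Complex.normSq_eq_conj_mul_self] at this
  exact_mod_cast this

theorem sum_normSq_col (h : IsONB ψ) (i : Fin m) : ∑ k, normSq (ψ k i) = 1 := by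
  have := h.sum_mul_star i i
  simp only [if_true, Complex.star_def, Complex.mul_conj] at this
  exact_mod_cast this

theorem proj_mul_proj (h : IsONB ψ) (k l : Fin m) :
    proj (ψ k) * proj (ψ l) = if k = l then proj (ψ k) else 0 := by
  rw [proj, proj, vecMulVec_mul_vecMulVec, show (fun j => star (ψ k j)) ⬝ᵥ ψ l = _ from h k l]
  split_ifs with hkl
  · subst hkl; simp
  · simp

end IsONB

theorem proj_conjTranspose {m : ℕ} (v : Fin m → ℂ) : (proj v)ᴴ = proj v := by
  ext i j
  simp [proj, vecMulVec_apply, mul_comm]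

section Pinching

variable {ι d : Type*} [Fintype ι] [Fintype d] (Q : ι → Matrix d d ℂ)

def pinch (ρ : Matrix d d ℂ) : Matrix d d ℂ :=
  ∑ k, Q k * ρ * Q k

theorem trace_mul_pinch (X ρ : Matrix d d ℂ) :
    trace (X * pinch Q ρ) = trace (pinch Q X * ρ) := by
  simp only [pinch, Matrix.mul_sum, Matrix.sum_mul, trace_sum]
  refine Finset.sum_congr rfl fun k _ => ?_
  rw [show X * (Q k * ρ * Q k) = X * Q k * ρ * Q k by simp only [Matrix.mul_assoc],
    trace_mul_comm]
  simp only [Matrix.mul_assoc]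

variable {Q}

theorem pinch_conjTranspose (hQ : ∀ k, (Q k)ᴴ = Q k) (ρ : Matrix d d ℂ) :
    (pinch Q ρ)ᴴ = pinch Q ρᴴ := by
  simp [pinch, conjTranspose_sum, Matrix.mul_assoc, hQ]

theorem pinch_pinch [DecidableEq ι] (hQ : ∀ k l, Q k * Q l = if k = l then Q k else 0)
    (ρ : Matrix d d ℂ) : pinch Q (pinch Q ρ) = pinch Q ρ := by
  have hsandwich : ∀ k l, Q k * (Q l * ρ * Q l) * Q k = (Q k * Q l) * ρ * (Q l * Q k) := by
    simp only [Matrix.mul_assoc, implies_true]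
  simp only [pinch, Matrix.mul_sum, Matrix.sum_mul, hsandwich, hQ]
  refine Finset.sum_congr rfl fun k _ => ?_
  rw [Finset.sum_eq_single k (fun l _ hlk => by simp [Ne.symm hlk]) (by simp)]
  simp

theorem trace_conjTranspose_mul_self_sub_pinch [DecidableEq ι] (hQ : ∀ k, (Q k)ᴴ = Q k)
    (hQQ : ∀ k l, Q k * Q l = if k = l then Q k else 0) (ρ : Matrix d d ℂ) :
    trace ((ρ - pinch Q ρ)ᴴ * (ρ - pinch Q ρ)) = trace (ρᴴ * ρ) - trace (ρᴴ * pinch Q ρ) := by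
  have hcross : trace ((pinch Q ρ)ᴴ * ρ) = trace (ρᴴ * pinch Q ρ) := by
    rw [pinch_conjTranspose hQ, trace_mul_pinch]
  have hsq : trace ((pinch Q ρ)ᴴ * pinch Q ρ) = trace (ρᴴ * pinch Q ρ) := by
    rw [pinch_conjTranspose hQ, ← trace_mul_pinch, pinch_pinch hQQ]
  rw [conjTranspose_sub, sub_mul, mul_sub, mul_sub, trace_sub, trace_sub, trace_sub, hcross, hsq]
  ring

end Pinching

theorem hsNormSq_smul_ofReal {d : Type*} [Fintype d] (r : ℝ) (C : Matrix d d ℂ) :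
    hsNormSq ((r : ℂ) • C) = r ^ 2 * hsNormSq C := by
  rw [hsNormSq, hsNormSq, conjTranspose_smul, Matrix.smul_mul, Matrix.mul_smul, trace_smul,
    trace_smul, smul_smul, Complex.star_def, Complex.conj_ofReal, smul_eq_mul, ← Complex.ofReal_mul,
    Complex.re_ofReal_mul, sq]

section Measurement

variable {m n : ℕ}

theorem piA_eq_pinch (ψ : Fin m → Fin m → ℂ) (ρ : Matrix (Fin m × Fin n) (Fin m × Fin n) ℂ) :
    piA ψ ρ = pinch (fun k => proj (ψ k) ⊗ₖ (1 : Matrix (Fin n) (Fin n) ℂ)) ρ :=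
  rfl

theorem piA_smul (ψ : Fin m → Fin m → ℂ) (z : ℂ) (ρ : Matrix (Fin m × Fin n) (Fin m × Fin n) ℂ) :
    piA ψ (z • ρ) = z • piA ψ ρ := by
  simp [piA, Finset.smul_sum]

theorem kronecker_one_sandwich_apply (P : Matrix (Fin m) (Fin m) ℂ)
    (ρ : Matrix (Fin m × Fin n) (Fin m × Fin n) ℂ) (i j : Fin m) (k l : Fin n) :
    ((P ⊗ₖ (1 : Matrix (Fin n) (Fin n) ℂ)) * ρ * (P ⊗ₖ (1 : Matrix (Fin n) (Fin n) ℂ)))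
      (i, k) (j, l) = ∑ r, ∑ s, P i r * ρ (r, k) (s, l) * P s j := by
  simp only [mul_apply, Fintype.sum_prod_type, kroneckerMap_apply, one_apply, mul_ite, ite_mul,
    mul_one, mul_zero, zero_mul, Finset.sum_ite_eq, Finset.sum_ite_eq', Finset.mem_univ, if_true,
    Finset.sum_mul]
  exact Finset.sum_comm

theorem IsONB.hsNormSq_sub_piA {ψ : Fin m → Fin m → ℂ} (h : IsONB ψ)
    (ρ : Matrix (Fin m × Fin n) (Fin m × Fin n) ℂ) :
    hsNormSq (ρ - piA ψ ρ) = hsNormSq ρ - (trace (ρᴴ * piA ψ ρ)).re := by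
  have hQ : ∀ k, (proj (ψ k) ⊗ₖ (1 : Matrix (Fin n) (Fin n) ℂ))ᴴ = proj (ψ k) ⊗ₖ 1 := fun k => by
    rw [conjTranspose_kronecker, proj_conjTranspose, conjTranspose_one]
  have hQQ : ∀ k l, (proj (ψ k) ⊗ₖ (1 : Matrix (Fin n) (Fin n) ℂ)) * (proj (ψ l) ⊗ₖ 1) =
      if k = l then proj (ψ k) ⊗ₖ 1 else 0 := fun k l => by
    rw [← mul_kronecker_mul, h.proj_mul_proj, Matrix.one_mul]
    split_ifs <;> simp
  rw [hsNormSq, hsNormSq, piA_eq_pinch, trace_conjTranspose_mul_self_sub_pinch hQ hQQ,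
    Complex.sub_re]

theorem gd_eq_two_mul_of_isLeast {ρ : Matrix (Fin 2 × Fin n) (Fin 2 × Fin n) ℂ} {v : ℝ}
    (h : IsLeast (Set.range fun ψ : {ψ : Fin 2 → Fin 2 → ℂ // IsONB ψ} =>
      hsNormSq (ρ - piA ψ.1 ρ)) v) : gd ρ = 2 * v := by
  rw [gd, iInf, h.csInf_eq]
  norm_num

end Measurement

theorem IsONB.normSq_mul_normSq_le {ψ : Fin 2 → Fin 2 → ℂ} (h : IsONB ψ) :
    normSq (ψ 0 0) * normSq (ψ 0 1) ≤ 1 / 4 := by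
  have hrow := h.sum_normSq_row 0
  rw [Fin.sum_univ_two] at hrow
  nlinarith [sq_nonneg (normSq (ψ 0 0) - normSq (ψ 0 1))]

theorem isONB_one {m : ℕ} : IsONB (1 : Matrix (Fin m) (Fin m) ℂ) := by
  intro k l
  simp [one_apply]

theorem normSq_mul_normSq_one :
    normSq ((1 : Matrix (Fin 2) (Fin 2) ℂ) 0 0) * normSq ((1 : Matrix (Fin 2) (Fin 2) ℂ) 0 1) =
      0 := by
  simp

def hadamardBasis : Fin 2 → Fin 2 → ℂ :=
  ![![(√2 : ℂ)⁻¹, (√2 : ℂ)⁻¹], ![(√2 : ℂ)⁻¹, -(√2 : ℂ)⁻¹]]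

theorem isONB_hadamardBasis : IsONB hadamardBasis := by
  have hc : (√2 : ℂ)⁻¹ * (√2 : ℂ)⁻¹ = 1 / 2 := by
    rw [← mul_inv, ← Complex.ofReal_mul, Real.mul_self_sqrt zero_le_two]
    norm_num
  intro k l
  fin_cases k <;> fin_cases l <;> simp [hadamardBasis, Fin.sum_univ_two] <;>
    linear_combination 2 * hc

theorem normSq_mul_normSq_hadamardBasis :
    normSq (hadamardBasis 0 0) * normSq (hadamardBasis 0 1) = 1 / 4 := by
  norm_num [hadamardBasis]

section Rho1

def rho1Unnorm (a b : ℝ) : Matrix (Fin 2 × Fin 3) (Fin 2 × Fin 3) ℂ :=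
  ofM6 !![(a:ℂ)^2, 0, 0, 0, (a:ℂ)*(b:ℂ), 0;
       0, (b:ℂ)^2, 0, 0, 0, (a:ℂ)*(b:ℂ);
       0, 0, 0, 0, 0, 0;
       0, 0, 0, 0, 0, 0;
       (a:ℂ)*(b:ℂ), 0, 0, 0, (b:ℂ)^2, 0;
       0, (a:ℂ)*(b:ℂ), 0, 0, 0, (a:ℂ)^2]

variable (a b : ℝ)

theorem rho1_eq_smul : rho1 a b = (((2 * (a ^ 2 + b ^ 2))⁻¹ : ℝ) : ℂ) • rho1Unnorm a b := by
  rw [show (((2 * (a ^ 2 + b ^ 2))⁻¹ : ℝ) : ℂ) = 1 / (2 * ((a : ℂ) ^ 2 + (b : ℂ) ^ 2)) by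
    push_cast; ring]
  rfl

theorem hsNormSq_rho1Unnorm : hsNormSq (rho1Unnorm a b) = 2 * (a ^ 2 + b ^ 2) ^ 2 := by
  simp only [hsNormSq, trace, diag, mul_apply, Fintype.sum_prod_type, Fin.sum_univ_two,
    Fin.sum_univ_three, conjTranspose_apply, rho1Unnorm, ofM6, of_apply]
  norm_num [← Complex.ofReal_pow]
  ring

theorem trace_rho1Unnorm_mul_sandwich (v : Fin 2 → ℂ) :
    trace ((rho1Unnorm a b)ᴴ * ((proj v ⊗ₖ (1 : Matrix (Fin 3) (Fin 3) ℂ)) * rho1Unnorm a b *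
      (proj v ⊗ₖ (1 : Matrix (Fin 3) (Fin 3) ℂ)))) =
      ((a ^ 4 * (normSq (v 0) ^ 2 + normSq (v 1) ^ 2) + b ^ 4 * (normSq (v 0) + normSq (v 1)) ^ 2 +
        4 * a ^ 2 * b ^ 2 * normSq (v 0) * normSq (v 1) : ℝ) : ℂ) := by
  -- expand only the outer product, so that the sandwich is read off `kronecker_one_sandwich_apply`
  simp only [trace, diag, mul_apply (M := (rho1Unnorm a b)ᴴ)]
  simp only [Fintype.sum_prod_type, Fin.sum_univ_two, Fin.sum_univ_three,
    conjTranspose_apply, kronecker_one_sandwich_apply, proj, vecMulVec_apply, rho1Unnorm, ofM6,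
    of_apply]
  norm_num [Complex.normSq_eq_conj_mul_self]
  ring

variable {a b}

theorem IsONB.hsNormSq_rho1Unnorm_sub_piA {ψ : Fin 2 → Fin 2 → ℂ} (h : IsONB ψ) :
    hsNormSq (rho1Unnorm a b - piA ψ (rho1Unnorm a b)) =
      4 * (a ^ 2 * b ^ 2 + normSq (ψ 0 0) * normSq (ψ 0 1) * (a ^ 2 * (a ^ 2 - 2 * b ^ 2))) := by
  have hrow := h.sum_normSq_row 0
  have hcol₀ := h.sum_normSq_col 0
  have hcol₁ := h.sum_normSq_col 1
  simp only [Fin.sum_univ_two] at hrow hcol₀ hcol₁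
  rw [h.hsNormSq_sub_piA, hsNormSq_rho1Unnorm, piA, Matrix.mul_sum, trace_sum, Fin.sum_univ_two,
    trace_rho1Unnorm_mul_sandwich, trace_rho1Unnorm_mul_sandwich, ← Complex.ofReal_add,
    Complex.ofReal_re]
  rw [show normSq (ψ 1 0) = normSq (ψ 0 1) by linarith,
    show normSq (ψ 1 1) = normSq (ψ 0 0) by linarith,
    show normSq (ψ 0 1) = 1 - normSq (ψ 0 0) by linarith]
  ring

theorem IsONB.hsNormSq_rho1_sub_piA {ψ : Fin 2 → Fin 2 → ℂ} (h : IsONB ψ) :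
    hsNormSq (rho1 a b - piA ψ (rho1 a b)) =
      (a ^ 2 * b ^ 2 + normSq (ψ 0 0) * normSq (ψ 0 1) * (a ^ 2 * (a ^ 2 - 2 * b ^ 2))) /
        (a ^ 2 + b ^ 2) ^ 2 := by
  rw [rho1_eq_smul, piA_smul, ← smul_sub, hsNormSq_smul_ofReal, h.hsNormSq_rho1Unnorm_sub_piA]
  field_simp
  ring

variable (a b) in
theorem isLeast_hsNormSq_rho1_sub_piA {ψ₀ : Fin 2 → Fin 2 → ℂ} (h₀ : IsONB ψ₀)
    (hmin : ∀ ψ : Fin 2 → Fin 2 → ℂ, IsONB ψ →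
      normSq (ψ₀ 0 0) * normSq (ψ₀ 0 1) * (a ^ 2 * (a ^ 2 - 2 * b ^ 2)) ≤
        normSq (ψ 0 0) * normSq (ψ 0 1) * (a ^ 2 * (a ^ 2 - 2 * b ^ 2))) :
    IsLeast (Set.range fun ψ : {ψ : Fin 2 → Fin 2 → ℂ // IsONB ψ} =>
        hsNormSq (rho1 a b - piA ψ.1 (rho1 a b)))
      ((a ^ 2 * b ^ 2 + normSq (ψ₀ 0 0) * normSq (ψ₀ 0 1) * (a ^ 2 * (a ^ 2 - 2 * b ^ 2))) /
        (a ^ 2 + b ^ 2) ^ 2) := by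
  refine ⟨⟨⟨ψ₀, h₀⟩, h₀.hsNormSq_rho1_sub_piA⟩, ?_⟩
  rintro _ ⟨⟨ψ, h⟩, rfl⟩
  dsimp only
  rw [h.hsNormSq_rho1_sub_piA]
  exact div_le_div_of_nonneg_right (add_le_add_right (hmin ψ h) _) (by positivity)

end Rho1

theorem stmt11_general (a b : ℝ) :
    (2 * b ^ 2 ≤ a ^ 2 →
      gd (rho1 a b) = 2 * a ^ 2 * b ^ 2 / (a ^ 2 + b ^ 2) ^ 2) ∧
    (a ^ 2 ≤ 2 * b ^ 2 →
      gd (rho1 a b) = (a ^ 4 + 2 * a ^ 2 * b ^ 2) / (2 * (a ^ 2 + b ^ 2) ^ 2)) := by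
  constructor
  · intro hab
    have hc : 0 ≤ a ^ 2 * (a ^ 2 - 2 * b ^ 2) := mul_nonneg (sq_nonneg a) (by linarith)
    have hleast := isLeast_hsNormSq_rho1_sub_piA a b isONB_one fun ψ _ => by
      rw [normSq_mul_normSq_one, zero_mul]
      exact mul_nonneg (mul_nonneg (Complex.normSq_nonneg _) (Complex.normSq_nonneg _)) hc
    rw [gd_eq_two_mul_of_isLeast hleast, normSq_mul_normSq_one]
    ring
  · intro hab
    have hc : a ^ 2 * (a ^ 2 - 2 * b ^ 2) ≤ 0 :=
      mul_nonpos_of_nonneg_of_nonpos (sq_nonneg a) (by linarith)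
    have hleast := isLeast_hsNormSq_rho1_sub_piA a b isONB_hadamardBasis fun ψ h => by
      rw [normSq_mul_normSq_hadamardBasis]
      nlinarith [h.normSq_mul_normSq_le]
    rw [gd_eq_two_mul_of_isLeast hleast, normSq_mul_normSq_hadamardBasis]
    field_simp
    ring

theorem stmt11 (a b : ℝ) (hb : 0 < b) :
    (2 * b ^ 2 ≤ a ^ 2 →
      gd (rho1 a b) = 2 * a ^ 2 * b ^ 2 / (a ^ 2 + b ^ 2) ^ 2) ∧
    (a ^ 2 ≤ 2 * b ^ 2 →
      gd (rho1 a b) = (a ^ 4 + 2 * a ^ 2 * b ^ 2) / (2 * (a ^ 2 + b ^ 2) ^ 2)) :=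
  stmt11_general a b

end
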